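/- For u ≥ 1 and z > 1 with x ≥ z^u, one has Σ_{z^u < a < x, P⁺(a) ≤ z} 1/a ≪ (log z)·e^{−u/2}, with an absolute implied constant. -/

import Mathlib

/-!
Rankin's trick. With `σ = 1 / (2 log z)`, every `a > z ^ u` satisfies `1 / a ≤ e^(-u/2) a^(σ - 1)`,
so the sum is at most `e^(-u/2)` times the Euler product `∏_{p ≤ z} (1 - p^(σ - 1))⁻¹`.
Since `σ log p ≤ 1/2` for `p ≤ z`, each factor is at most `(1 - p^(-1-σ))⁻¹ exp (O (σ log p / p))`,
and these exponentials multiply to `O(1)` by Mertens' bound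
`∑_{p ≤ n} log p / p ≤ log n + log 4`; finally
`∏_p (1 - p^(-1-σ))⁻¹ ≤ ζ(1 + σ) ≤ 1 + 1/σ = 1 + 2 log z`.
-/

open Finset Real

noncomputable def natRpowHom (t : ℝ) : ℕ →* ℝ where
  toFun n := (n : ℝ) ^ t
  map_one' := by simp
  map_mul' m n := by push_cast; exact mul_rpow m.cast_nonneg n.cast_nonneg

@[simp]
lemma natRpowHom_apply (t : ℝ) (n : ℕ) : natRpowHom t n = (n : ℝ) ^ t := rfl

lemma hasSum_smoothNumbers_rpow {t : ℝ} (ht : t < 0) (N : ℕ) :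
    HasSum (fun m : N.smoothNumbers => (m : ℝ) ^ t) (∏ p ∈ N.primesBelow, (1 - (p : ℝ) ^ t)⁻¹) :=
  (EulerProduct.summable_and_hasSum_smoothNumbers_prod_primesBelow_geometric
    (f := natRpowHom t) (fun hp => by
      rw [natRpowHom_apply, norm_of_nonneg (by positivity)]
      exact rpow_lt_one_of_one_lt_of_neg (mod_cast hp.one_lt) ht) N).2

lemma sum_rpow_le_prod_primesBelow {t : ℝ} (ht : t < 0) {N : ℕ} {A : Finset ℕ}
    (hA : ∀ a ∈ A, a ∈ N.smoothNumbers) :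
    ∑ a ∈ A, (a : ℝ) ^ t ≤ ∏ p ∈ N.primesBelow, (1 - (p : ℝ) ^ t)⁻¹ := by
  have hsum : HasSum (N.smoothNumbers.indicator fun n : ℕ => (n : ℝ) ^ t) _ :=
    hasSum_subtype_iff_indicator.mp (hasSum_smoothNumbers_rpow ht N)
  calc ∑ a ∈ A, (a : ℝ) ^ t
      = ∑ a ∈ A, N.smoothNumbers.indicator (fun n : ℕ => (n : ℝ) ^ t) a :=
        sum_congr rfl fun a ha => (Set.indicator_of_mem (hA a ha) (fun n : ℕ => (n : ℝ) ^ t)).symm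
    _ ≤ _ := sum_le_hasSum A (fun n _ => Set.indicator_nonneg (fun _ _ => by positivity) n) hsum

lemma prod_primesBelow_inv_one_sub_rpow_neg_le {s : ℝ} (hs : 1 < s) (N : ℕ) :
    ∏ p ∈ N.primesBelow, (1 - (p : ℝ) ^ (-s))⁻¹ ≤ 1 + 1 / (s - 1) := by
  have hsum : Summable fun n : ℕ => (n : ℝ) ^ (-s) := summable_nat_rpow.mpr (by linarith)
  have hzeta : ∑' n : ℕ, 1 / ((n : ℝ) + 1) ^ s ≤ 1 + 1 / (s - 1) := by
    -- `ζ(s) - 1 / (s - 1) = 1 - s * termTSum s`, where `termTSum s` is a sum of nonnegative integrals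
    have := ZetaAsymptotics.zeta_limit_aux1 hs
    have : 0 ≤ ZetaAsymptotics.termTSum s := tsum_nonneg fun n => ZetaAsymptotics.term_nonneg _ _
    nlinarith
  calc ∏ p ∈ N.primesBelow, (1 - (p : ℝ) ^ (-s))⁻¹
      = ∑' m : N.smoothNumbers, (m : ℝ) ^ (-s) :=
        (hasSum_smoothNumbers_rpow (by linarith) N).tsum_eq.symm
    _ ≤ ∑' n : ℕ, (n : ℝ) ^ (-s) := hsum.tsum_subtype_le _ _ fun n => by positivity
    _ = ∑' n : ℕ, 1 / ((n : ℝ) + 1) ^ s := by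
        rw [hsum.tsum_eq_zero_add]
        simp only [Nat.cast_zero, zero_rpow (by linarith : -s ≠ 0), zero_add, Nat.cast_add_one]
        exact tsum_congr fun n => by rw [rpow_neg (by positivity), one_div]
    _ ≤ 1 + 1 / (s - 1) := hzeta

lemma div_le_factorization_factorial {p : ℕ} (hp : p.Prime) (n : ℕ) :
    n / p ≤ n.factorial.factorization p := by
  rw [Nat.factorization_factorial hp (Nat.lt_add_of_pos_right two_pos)]
  simpa using single_le_sum (f := fun i => n / p ^ i) (fun _ _ => Nat.zero_le _)
    (mem_Ico.mpr ⟨le_refl 1, by omega⟩ : 1 ∈ Ico 1 (Nat.log p n + 2))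

lemma sum_primesLE_div_mul_log_le (n : ℕ) :
    ∑ p ∈ n.primesLE, ((n / p : ℕ) : ℝ) * log p ≤ n * log n := by
  have hsub : n.primesLE ⊆ n.factorial.primeFactors := fun p hp =>
    Nat.mem_primeFactors.mpr ⟨Nat.prime_of_mem_primesLE hp,
      Nat.dvd_factorial (Nat.prime_of_mem_primesLE hp).pos (Nat.le_of_mem_primesLE hp),
      Nat.factorial_ne_zero n⟩
  calc ∑ p ∈ n.primesLE, ((n / p : ℕ) : ℝ) * log p
      ≤ ∑ p ∈ n.primesLE, (n.factorial.factorization p : ℝ) * log p := by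
        refine sum_le_sum fun p hp => ?_
        gcongr
        exact div_le_factorization_factorial (Nat.prime_of_mem_primesLE hp) n
    _ ≤ ∑ p ∈ n.factorial.primeFactors, (n.factorial.factorization p : ℝ) * log p :=
        sum_le_sum_of_subset_of_nonneg hsub fun p _ _ => by positivity
    _ = log n.factorial := by
        rw [log_nat_eq_sum_factorization, Finsupp.sum, Nat.support_factorization]
    _ ≤ log ((n : ℝ) ^ n) := by
        gcongr
        exact_mod_cast Nat.factorial_le_pow n
    _ = n * log n := log_pow n _

lemma sum_primesLE_log_div_le (n : ℕ) :
    ∑ p ∈ n.primesLE, log p / p ≤ log n + log 4 := by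
  rcases n.eq_zero_or_pos with rfl | hn
  · simp only [Nat.primesLE_zero, sum_empty, Nat.cast_zero, log_zero, zero_add]
    positivity
  have hfloor : ∀ p ∈ n.primesLE, n * (log p / p) ≤ ((n / p : ℕ) : ℝ) * log p + log p := by
    intro p hp
    have hlog : 0 ≤ log p := log_nonneg (by exact_mod_cast (Nat.prime_of_mem_primesLE hp).one_le)
    have := Nat.lt_floor_add_one ((n : ℝ) / p)
    rw [Nat.floor_div_eq_div] at this
    calc n * (log p / p) = n / p * log p := by ring
      _ ≤ (((n / p : ℕ) : ℝ) + 1) * log p := mul_le_mul_of_nonneg_right this.le hlog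
      _ = _ := by ring
  have htheta : ∑ p ∈ n.primesLE, log p ≤ log 4 * n :=
    Chebyshev.theta_eq_sum_primesLE_log n ▸ Chebyshev.theta_le_log4_mul_x n.cast_nonneg
  rw [← mul_le_mul_iff_of_pos_left (by exact_mod_cast hn : (0 : ℝ) < n), mul_sum]
  calc ∑ p ∈ n.primesLE, n * (log p / p)
      ≤ ∑ p ∈ n.primesLE, (((n / p : ℕ) : ℝ) * log p + log p) := sum_le_sum hfloor
    _ ≤ n * log n + log 4 * n := by
        rw [sum_add_distrib]
        exact add_le_add (sum_primesLE_div_mul_log_le n) htheta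
    _ = n * (log n + log 4) := by ring

lemma inv_one_sub_le_inv_one_sub_mul_exp {a b : ℝ} (hba : b ≤ a) (ha : a ≤ 5 / 6) :
    (1 - a)⁻¹ ≤ (1 - b)⁻¹ * exp (6 * (a - b)) := by
  have ha1 : 0 < 1 - a := by linarith
  have hb1 : 0 < 1 - b := by linarith
  calc (1 - a)⁻¹ = (1 - b)⁻¹ * ((1 - b) / (1 - a)) := by field_simp
    _ ≤ (1 - b)⁻¹ * exp (6 * (a - b)) := by
        gcongr
        rw [div_le_iff₀ ha1]
        calc 1 - b ≤ (6 * (a - b) + 1) * (1 - a) := by nlinarith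
          _ ≤ exp (6 * (a - b)) * (1 - a) := by gcongr; exact add_one_le_exp _

lemma exp_le_five_div_three {y : ℝ} (hy : y ≤ 1 / 2) : exp y ≤ 5 / 3 := by
  have hsq : exp (1 / 2) ^ 2 = exp 1 := by rw [← exp_nat_mul]; norm_num
  have := exp_one_lt_d9
  calc exp y ≤ exp (1 / 2) := exp_le_exp.mpr hy
    _ ≤ 5 / 3 := by nlinarith [exp_pos (1 / 2)]

lemma exp_sub_exp_neg_le {y : ℝ} (hy0 : 0 ≤ y) (hy : y ≤ 1 / 2) : exp y - exp (-y) ≤ 8 / 3 * y := by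
  have h₁ : 1 - y ≤ exp (-y) := by linarith [add_one_le_exp (-y)]
  have h₂ : exp y ≤ 1 + y * exp y := by
    have := mul_le_mul_of_nonneg_left h₁ (exp_pos y).le
    rw [← exp_add, add_neg_cancel, exp_zero] at this
    linarith
  nlinarith [mul_le_mul_of_nonneg_left (exp_le_five_div_three hy) hy0]

lemma inv_one_sub_rpow_sub_one_le {p σ : ℝ} (hp : 2 ≤ p) (hσ : 0 ≤ σ)
    (hσp : σ * log p ≤ 1 / 2) :
    (1 - p ^ (σ - 1))⁻¹ ≤ (1 - p ^ (-(1 + σ)))⁻¹ * exp (16 * σ * (log p / p)) := by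
  have hp0 : 0 < p := by linarith
  set y := σ * log p with hy
  have hy0 : 0 ≤ y := mul_nonneg hσ (log_nonneg (by linarith))
  have ha : p ^ (σ - 1) = exp y / p := by
    rw [rpow_def_of_pos hp0, show log p * (σ - 1) = y - log p by ring, exp_sub, exp_log hp0]
  have hb : p ^ (-(1 + σ)) = exp (-y) / p := by
    rw [rpow_def_of_pos hp0, show log p * (-(1 + σ)) = -y - log p by ring, exp_sub, exp_log hp0]
  have hb1 : exp (-y) / p < 1 := by
    rw [div_lt_one hp0]; linarith [exp_le_one_iff.mpr (neg_nonpos.mpr hy0)]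
  rw [ha, hb]
  calc (1 - exp y / p)⁻¹ ≤ (1 - exp (-y) / p)⁻¹ * exp (6 * (exp y / p - exp (-y) / p)) := by
        refine inv_one_sub_le_inv_one_sub_mul_exp (by gcongr; linarith) ?_
        calc exp y / p ≤ (5 / 3) / 2 := by gcongr; exact exp_le_five_div_three hσp
          _ = 5 / 6 := by norm_num
    _ ≤ (1 - exp (-y) / p)⁻¹ * exp (16 * σ * (log p / p)) := by
        have hexp : 6 * (exp y / p - exp (-y) / p) ≤ 16 * σ * (log p / p) := by
          rw [← sub_div, show 16 * σ * (log p / p) = 6 * (8 / 3 * y / p) by ring]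
          gcongr
          exact exp_sub_exp_neg_le hy0 hσp
        gcongr

lemma prod_primesLE_inv_one_sub_rpow_le {z σ : ℝ} (hz : 2 ≤ z) (hσ : σ * log z = 1 / 2) :
    ∏ p ∈ ⌊z⌋₊.primesLE, (1 - (p : ℝ) ^ (σ - 1))⁻¹ ≤ 4 * exp 24 * log z := by
  have hlog2 : 1 / 2 < log 2 := by linarith [log_two_gt_d9]
  have hlz : log 2 ≤ log z := log_le_log two_pos hz
  have hσ0 : 0 < σ := pos_of_mul_pos_left (hσ ▸ one_half_pos) (by linarith)
  have hle : ∀ p ∈ ⌊z⌋₊.primesLE, (p : ℝ) ≤ z := fun p hp =>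
    (Nat.cast_le.mpr (Nat.le_of_mem_primesLE hp)).trans (Nat.floor_le (by linarith))
  have hfactor : ∀ p ∈ ⌊z⌋₊.primesLE, (1 - (p : ℝ) ^ (σ - 1))⁻¹
      ≤ (1 - (p : ℝ) ^ (-(1 + σ)))⁻¹ * exp (16 * σ * (log p / p)) := fun p hp =>
    inv_one_sub_rpow_sub_one_le (mod_cast Nat.two_le_of_mem_primesLE hp) hσ0.le
      (hσ ▸ by gcongr; exacts [Nat.cast_pos.mpr (Nat.prime_of_mem_primesLE hp).pos, hle p hp])
  have hnonneg : ∀ p ∈ ⌊z⌋₊.primesLE, 0 ≤ (1 - (p : ℝ) ^ (σ - 1))⁻¹ := fun p hp =>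
    inv_nonneg.mpr (sub_nonneg.mpr (rpow_le_one_of_one_le_of_nonpos
      (mod_cast (Nat.prime_of_mem_primesLE hp).one_le) (by nlinarith)))
  have hmertens : ∑ p ∈ ⌊z⌋₊.primesLE, log p / p ≤ log z + log 4 :=
    (sum_primesLE_log_div_le _).trans (by
      gcongr
      exacts [Nat.cast_pos.mpr (Nat.floor_pos.mpr (by linarith)), Nat.floor_le (by linarith)])
  have hlog4 : σ * log 4 ≤ 1 := by
    rw [show (4 : ℝ) = 2 ^ 2 by norm_num, log_pow, Nat.cast_two]
    nlinarith [mul_le_mul_of_nonneg_left hlz hσ0.le]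
  calc ∏ p ∈ ⌊z⌋₊.primesLE, (1 - (p : ℝ) ^ (σ - 1))⁻¹
      ≤ ∏ p ∈ ⌊z⌋₊.primesLE, ((1 - (p : ℝ) ^ (-(1 + σ)))⁻¹ * exp (16 * σ * (log p / p))) :=
        prod_le_prod hnonneg hfactor
    _ = (∏ p ∈ ⌊z⌋₊.primesLE, (1 - (p : ℝ) ^ (-(1 + σ)))⁻¹)
          * exp (16 * σ * ∑ p ∈ ⌊z⌋₊.primesLE, log p / p) := by
        rw [prod_mul_distrib, mul_sum, exp_sum]
    _ ≤ (1 + 1 / σ) * exp 24 := by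
        refine mul_le_mul ?_ (exp_le_exp.mpr ?_) (exp_pos _).le (by positivity)
        · have := prod_primesBelow_inv_one_sub_rpow_neg_le (by linarith : 1 < 1 + σ) (⌊z⌋₊ + 1)
          rwa [add_sub_cancel_left] at this
        · nlinarith [mul_le_mul_of_nonneg_left hmertens (by positivity : 0 ≤ 16 * σ)]
    _ ≤ 4 * exp 24 * log z := by
        rw [show 1 / σ = 2 * log z by field_simp; linarith]
        nlinarith [exp_pos 24]

lemma sum_one_div_le_rpow_neg_mul_sum_rpow {A : Finset ℕ} {y σ : ℝ} (hy : 0 < y) (hσ : 0 ≤ σ)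
    (hA : ∀ a ∈ A, y ≤ a) :
    ∑ a ∈ A, (1 : ℝ) / a ≤ y ^ (-σ) * ∑ a ∈ A, (a : ℝ) ^ (σ - 1) := by
  rw [mul_sum]
  refine sum_le_sum fun a ha => ?_
  have ha0 : (0 : ℝ) < a := hy.trans_le (hA a ha)
  calc (1 : ℝ) / a ≤ (a / y) ^ σ / a :=
        div_le_div_of_nonneg_right (one_le_rpow ((one_le_div hy).mpr (hA a ha)) hσ) ha0.le
    _ = y ^ (-σ) * (a : ℝ) ^ (σ - 1) := by
        rw [div_rpow ha0.le hy.le, rpow_neg hy.le, rpow_sub_one ha0.ne']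
        ring

lemma mem_smoothNumbers_floor_add_one {a : ℕ} {z : ℝ} (ha : a ≠ 0)
    (h : ∀ p ∈ a.primeFactors, (p : ℝ) ≤ z) : a ∈ (⌊z⌋₊ + 1).smoothNumbers :=
  Nat.mem_smoothNumbers_of_primeFactors_subset ha fun p hp =>
    mem_range.mpr (Nat.lt_succ_of_le (Nat.le_floor (h p hp)))

lemma eq_one_of_mem_smoothNumbers_floor_add_one {a : ℕ} {z : ℝ} (hz : z < 2)
    (ha : a ∈ (⌊z⌋₊ + 1).smoothNumbers) : a = 1 := by
  have hfloor : ⌊z⌋₊ + 1 ≤ 2 := Nat.succ_le_of_lt ((Nat.floor_lt' two_ne_zero).mpr (by simpa))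
  have := Nat.smoothNumbers_mono hfloor ha
  rwa [Nat.smoothNumbers_succ Nat.not_prime_one, Nat.smoothNumbers_one] at this

lemma sum_one_div_le_of_forall_primeFactors_le {z y : ℝ} (hz : 1 < z) (hy : 1 ≤ y)
    {A : Finset ℕ} (hA : ∀ a ∈ A, y < a ∧ ∀ p ∈ a.primeFactors, (p : ℝ) ≤ z) :
    ∑ a ∈ A, (1 : ℝ) / a ≤ 4 * exp 24 * log z * y ^ (-(1 / (2 * log z))) := by
  have hsmooth : ∀ a ∈ A, a ∈ (⌊z⌋₊ + 1).smoothNumbers := fun a ha =>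
    mem_smoothNumbers_floor_add_one
      (Nat.cast_pos.mp (show (0 : ℝ) < a by linarith [(hA a ha).1])).ne' (hA a ha).2
  have hlz : 0 < log z := log_pos hz
  rcases lt_or_ge z 2 with hz2 | hz2
  · rw [sum_eq_zero fun a ha => absurd (hA a ha).1 (by
      rw [eq_one_of_mem_smoothNumbers_floor_add_one hz2 (hsmooth a ha), Nat.cast_one]
      exact hy.not_gt)]
    positivity
  have hσ : 1 / (2 * log z) * log z = 1 / 2 := by field_simp
  have hσ1 : 1 / (2 * log z) - 1 < 0 := by
    rw [sub_neg, div_lt_one (by positivity)]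
    linarith [log_two_gt_d9, log_le_log two_pos hz2]
  calc ∑ a ∈ A, (1 : ℝ) / a
      ≤ y ^ (-(1 / (2 * log z))) * ∑ a ∈ A, (a : ℝ) ^ (1 / (2 * log z) - 1) :=
        sum_one_div_le_rpow_neg_mul_sum_rpow (by linarith) (by positivity)
          fun a ha => (hA a ha).1.le
    _ ≤ y ^ (-(1 / (2 * log z))) * (4 * exp 24 * log z) := by
        gcongr
        exact (sum_rpow_le_prod_primesBelow hσ1 hsmooth).trans
          (prod_primesLE_inv_one_sub_rpow_le hz2 hσ)
    _ = _ := mul_comm _ _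

theorem stmt_7 :
    ∃ C : ℝ, 0 < C ∧ ∀ (u x z : ℝ), 1 ≤ u → 1 < z → z ^ u ≤ x →
      ∑ a ∈ (Finset.Icc 1 ⌊x⌋₊).filter
          (fun a : ℕ => z ^ u < (a : ℝ) ∧ (a : ℝ) < x ∧
            ∀ p : ℕ, p ∈ a.primeFactors → (p : ℝ) ≤ z),
        (1 : ℝ) / a
        ≤ C * Real.log z * Real.exp (-u / 2) := by
  refine ⟨4 * exp 24, by positivity, fun u x z hu hz _ => ?_⟩
  have hz0 : 0 < z := by linarith
  have hscale : (z ^ u) ^ (-(1 / (2 * log z))) = exp (-u / 2) := by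
    rw [← rpow_mul hz0.le, rpow_def_of_pos hz0]
    congr 1
    field_simp [(log_pos hz).ne']
  calc _ ≤ 4 * exp 24 * log z * (z ^ u) ^ (-(1 / (2 * log z))) :=
        sum_one_div_le_of_forall_primeFactors_le hz (one_le_rpow hz.le (by linarith))
          fun a ha => ⟨(mem_filter.mp ha).2.1, (mem_filter.mp ha).2.2.2⟩
    _ = _ := by rw [hscale]
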